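/- arXiv:2410.06137 — 2 statements merged into one kernel-verified Lean document; each statement's English description precedes it below -/
import Mathlib

section
/- Let A be a unital associative algebra with a double Poisson bracket ⟪·,·⟫, and let μ : A⊗A → A be multiplication. Then the induced bracket ⟨[a],[b]⟩ := [μ(⟪a,b⟫)] on the quotient vector space A^ab = A/[A,A] is well-defined; that is, if a − a' ∈ [A,A] then μ(⟪a,b⟫) − μ(⟪a',b⟫) ∈ [A,A], and similarly in the second argument. -/
open TensorProduct

section Aux

variable {k : Type*} [Field k] {A : Type*} [Ring A] [Algebra k A]

variable (k A) in
def commSpan : Submodule k A := Submodule.span k {x : A | ∃ p q : A, x = p * q - q * p}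
local notation "S" => commSpan k A

lemma mul'_left_smul (b : A) (t : A ⊗[k] A) :
    LinearMap.mul' k A ((b ⊗ₜ[k] (1:A)) * t) = b * LinearMap.mul' k A t := by
  induction t using TensorProduct.induction_on with
  | zero => simp
  | tmul x y => simp [Algebra.TensorProduct.tmul_mul_tmul, mul_assoc]
  | add x y hx hy => simp [mul_add, hx, hy]

lemma mul'_right_smul (c : A) (t : A ⊗[k] A) :
    LinearMap.mul' k A (t * ((1:A) ⊗ₜ[k] c)) = LinearMap.mul' k A t * c := by
  induction t using TensorProduct.induction_on with
  | zero => simp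
  | tmul x y => simp [Algebra.TensorProduct.tmul_mul_tmul, mul_assoc]
  | add x y hx hy => simp [add_mul, hx, hy]

lemma comm_mem (p q : A) : p * q - q * p ∈ S :=
  Submodule.subset_span (⟨p, q, rfl⟩ : _ ∈ {x : A | ∃ p q : A, x = p * q - q * p})

lemma mul'_sub_comm_mem (t : A ⊗[k] A) :
    LinearMap.mul' k A t - LinearMap.mul' k A ((TensorProduct.comm k A A) t) ∈ S := by
  induction t using TensorProduct.induction_on with
  | zero => simpa using Submodule.zero_mem _
  | tmul x y => simpa using comm_mem x y
  | add x y hx hy =>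
      have := Submodule.add_mem _ hx hy
      simp only [map_add] at this ⊢
      convert this using 1
      abel

end Aux

/-- the bracket induced on `A/[A,A]` by `μ ∘ ⟪·,·⟫` is well defined. -/
theorem induced_bracket_well_defined
    {k : Type*} [Field k] [CharZero k]
    {A : Type*} [Ring A] [Algebra k A]
    (db : A →ₗ[k] A →ₗ[k] A ⊗[k] A)
    (skew : ∀ a b : A, db a b = - (TensorProduct.comm k A A) (db b a))
    (outer : ∀ a b c : A,
      db a (b * c) = (b ⊗ₜ[k] (1 : A)) * db a c + db a b * ((1 : A) ⊗ₜ[k] c)) :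
    ∀ a a' b b' : A,
      (a - a' ∈ Submodule.span k {x : A | ∃ p q : A, x = p * q - q * p} →
        LinearMap.mul' k A (db a b) - LinearMap.mul' k A (db a' b)
          ∈ Submodule.span k {x : A | ∃ p q : A, x = p * q - q * p}) ∧
      (b - b' ∈ Submodule.span k {x : A | ∃ p q : A, x = p * q - q * p} →
        LinearMap.mul' k A (db a b) - LinearMap.mul' k A (db a b')
          ∈ Submodule.span k {x : A | ∃ p q : A, x = p * q - q * p}) := by
  set S := Submodule.span k {x : A | ∃ p q : A, x = p * q - q * p} with hS
  -- key: μ⟪a, pq - qp⟫ ∈ S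
  have key2 : ∀ a p q : A, LinearMap.mul' k A (db a (p * q - q * p)) ∈ S := by
    intro a p q
    have h : db a (p * q - q * p) = db a (p * q) - db a (q * p) := by
      rw [map_sub]
    rw [h, map_sub, outer a p q, outer a q p, map_add, map_add,
      mul'_left_smul, mul'_right_smul, mul'_left_smul, mul'_right_smul]
    have h1 : p * LinearMap.mul' k A (db a q) - LinearMap.mul' k A (db a q) * p ∈ S :=
      comm_mem _ _
    have h2 : LinearMap.mul' k A (db a p) * q - q * LinearMap.mul' k A (db a p) ∈ S :=
      comm_mem _ _
    have := Submodule.add_mem _ h1 h2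
    convert this using 1
    abel
  -- x ∈ S ⇒ μ⟪a, x⟫ ∈ S
  have second : ∀ a x : A, x ∈ S → LinearMap.mul' k A (db a x) ∈ S := by
    intro a x hx
    induction hx using Submodule.span_induction with
    | mem y hy =>
        obtain ⟨p, q, rfl⟩ := hy
        exact key2 a p q
    | zero => simpa using Submodule.zero_mem S
    | add y z _ _ hy hz => rw [map_add, map_add]; exact Submodule.add_mem _ hy hz
    | smul c y _ hy => rw [map_smul, map_smul]; exact Submodule.smul_mem _ c hy
  -- x ∈ S ⇒ μ⟪x, b⟫ ∈ S
  have first : ∀ b x : A, x ∈ S → LinearMap.mul' k A (db x b) ∈ S := by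
    intro b x hx
    have hsk : LinearMap.mul' k A (db x b)
        = -LinearMap.mul' k A ((TensorProduct.comm k A A) (db b x)) := by
      rw [skew x b, map_neg]
    rw [hsk]
    have h1 := mul'_sub_comm_mem (k := k) (db b x)
    rw [show commSpan k A = Submodule.span k {x : A | ∃ p q : A, x = p * q - q * p} from rfl, ← hS] at h1
    have h2 := second b x hx
    have h3 := Submodule.sub_mem _ h2 h1
    rw [sub_sub_cancel] at h3
    exact Submodule.neg_mem _ h3
  intro a a' b b'
  constructor
  · intro h
    have := first b _ h
    rwa [map_sub, LinearMap.sub_apply, map_sub] at this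
  · intro h
    have := second a _ h
    rwa [map_sub, map_sub] at this
end

section
/- Let A be a unital associative algebra with a double bracket ⟪·,·⟫ whose associated triple bracket is defined by ⟪a,b,c⟫ := Σ_{k=0}^{2} τ₃^k ∘ (⟪·,·⟫ ⊗ Id) ∘ (Id ⊗ ⟪·,·⟫) ∘ τ₃^{−k}. Then the triple bracket is a derivation in its last argument for the outer trimodule structure: ⟪a,b,cd⟫ = (c⊗1⊗1)·⟪a,b,d⟫ + ⟪a,b,c⟫·(1⊗1⊗d). -/
open TensorProduct

noncomputable section

variable {k : Type*} [Field k] [CharZero k] {A : Type*} [Ring A] [Algebra k A]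

/-- The cyclic permutation `τ₃ : x₁⊗x₂⊗x₃ ↦ x₂⊗x₃⊗x₁` on `A ⊗ (A ⊗ A)`. -/
def tau3 (k A : Type*) [Field k] [Ring A] [Algebra k A] :
    (A ⊗[k] (A ⊗[k] A)) ≃ₗ[k] (A ⊗[k] (A ⊗[k] A)) :=
  (TensorProduct.comm k A (A ⊗[k] A)) ≪≫ₗ (TensorProduct.assoc k A A A)

/-- The double bracket applied to the first two tensor factors, `⟪·,·⟫ ⊗ Id`. -/
def dbId (db : A →ₗ[k] A →ₗ[k] A ⊗[k] A) :
    (A ⊗[k] (A ⊗[k] A)) →ₗ[k] (A ⊗[k] (A ⊗[k] A)) :=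
  (TensorProduct.assoc k A A A).toLinearMap
    ∘ₗ LinearMap.rTensor A (TensorProduct.lift db)
    ∘ₗ (TensorProduct.assoc k A A A).symm.toLinearMap

/-- The double bracket applied to the last two tensor factors, `Id ⊗ ⟪·,·⟫`. -/
def idDb (db : A →ₗ[k] A →ₗ[k] A ⊗[k] A) :
    (A ⊗[k] (A ⊗[k] A)) →ₗ[k] (A ⊗[k] (A ⊗[k] A)) :=
  LinearMap.lTensor A (TensorProduct.lift db)

/-- The triple bracket associated to a double bracket:
`⟪a,b,c⟫ = Σ_{i=0}^{2} τ₃^i ∘ (⟪·,·⟫⊗Id) ∘ (Id⊗⟪·,·⟫) ∘ τ₃^{-i} (a⊗b⊗c)`. -/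
def tripleBracket (db : A →ₗ[k] A →ₗ[k] A ⊗[k] A) (a b c : A) :
    A ⊗[k] (A ⊗[k] A) :=
  ∑ i ∈ Finset.range 3,
    ((tau3 k A).toLinearMap ^ i)
      ((dbId db) ((idDb db)
        (((tau3 k A).symm.toLinearMap ^ i) (a ⊗ₜ[k] (b ⊗ₜ[k] c)))))


set_option linter.unusedSectionVars false
set_option maxHeartbeats 1000000
set_option synthInstance.maxHeartbeats 200000

section Aux
variable (db : A →ₗ[k] A →ₗ[k] A ⊗[k] A)

local notation "σ" => TensorProduct.comm k A A
local notation "α" => TensorProduct.assoc k A A A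
local notation "τ" => tau3 k A

@[simp] lemma tau3_tmul (x y z : A) :
    tau3 k A (x ⊗ₜ[k] (y ⊗ₜ[k] z)) = y ⊗ₜ[k] (z ⊗ₜ[k] x) := rfl

/-- `psi u v = Σ m ⊗ (n r ⊗ s)` for `u = Σ m⊗n`, `v = Σ r⊗s`. -/
def psi (u v : A ⊗[k] A) : A ⊗[k] (A ⊗[k] A) :=
  (LinearMap.lTensor A ((TensorProduct.mk k A A).flip 1) u) *
    ((TensorProduct.mk k A (A ⊗[k] A)) 1 v)

lemma psi_tmul (m n r s : A) :
    psi (m ⊗ₜ[k] n) (r ⊗ₜ[k] s) = m ⊗ₜ[k] ((n * r) ⊗ₜ[k] s) := by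
  simp [psi, Algebra.TensorProduct.tmul_mul_tmul]

lemma psi_add_left (u u' v : A ⊗[k] A) : psi (u + u') v = psi u v + psi u' v := by
  simp [psi, add_mul]

lemma psi_neg_left (u v : A ⊗[k] A) : psi (-u) v = - psi u v := by
  rw [psi, psi, map_neg]
  exact neg_mul ((LinearMap.lTensor A ((TensorProduct.mk k A A).flip 1)) u)
    (((TensorProduct.mk k A (A ⊗[k] A))) 1 v)

lemma comm_mul_left (c : A) (x : A ⊗[k] A) :
    σ ((c ⊗ₜ[k] (1:A)) * x) = ((1:A) ⊗ₜ[k] c) * σ x := by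
  induction x using TensorProduct.induction_on with
  | zero => simp
  | tmul p q => simp [Algebra.TensorProduct.tmul_mul_tmul]
  | add x y hx hy => simp [mul_add, hx, hy]

lemma comm_mul_right (d : A) (x : A ⊗[k] A) :
    σ (x * ((1:A) ⊗ₜ[k] d)) = σ x * (d ⊗ₜ[k] (1:A)) := by
  induction x using TensorProduct.induction_on with
  | zero => simp
  | tmul p q => simp [Algebra.TensorProduct.tmul_mul_tmul]
  | add x y hx hy => simp [add_mul, hx, hy]

/-- derivation rule in the first slot, from skew-symmetry and the outer rule. -/
lemma inner_rule (skew : ∀ a b : A, db a b = - σ (db b a))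
    (outer : ∀ a b c : A,
      db a (b * c) = (b ⊗ₜ[k] (1 : A)) * db a c + db a b * ((1 : A) ⊗ₜ[k] c))
    (c d p : A) :
    db (c * d) p = ((1:A) ⊗ₜ[k] c) * db d p + db c p * (d ⊗ₜ[k] (1:A)) := by
  rw [skew (c*d) p, outer p c d, map_add, comm_mul_left, comm_mul_right,
    neg_add, skew d p, skew c p]
  simp [mul_neg, neg_mul]

lemma L1 (c q : A) (v : A ⊗[k] A) :
    (α) (((c ⊗ₜ[k] (1:A)) * v) ⊗ₜ[k] q)
      = (c ⊗ₜ[k] ((1:A) ⊗ₜ[k] (1:A))) * (α) (v ⊗ₜ[k] q) := by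
  induction v using TensorProduct.induction_on with
  | zero => simp
  | tmul r s => simp [Algebra.TensorProduct.tmul_mul_tmul]
  | add x y hx hy => simp only [add_tmul, tmul_add, mul_add, add_mul, map_add, hx, hy]

lemma L2 (p q : A) (w : A ⊗[k] A) :
    (α) ((w * ((1:A) ⊗ₜ[k] p)) ⊗ₜ[k] q) = psi w (p ⊗ₜ[k] q) := by
  induction w using TensorProduct.induction_on with
  | zero => simp [psi]
  | tmul m n => simp [Algebra.TensorProduct.tmul_mul_tmul, psi_tmul]
  | add x y hx hy =>
    simp only [add_tmul, tmul_add, mul_add, add_mul, map_add, hx, hy, psi_add_left]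

lemma LB (q d : A) (v : A ⊗[k] A) :
    (α) (v ⊗ₜ[k] (q * d)) = (α) (v ⊗ₜ[k] q) * ((1:A) ⊗ₜ[k] ((1:A) ⊗ₜ[k] d)) := by
  induction v using TensorProduct.induction_on with
  | zero => simp
  | tmul r s => simp [Algebra.TensorProduct.tmul_mul_tmul]
  | add x y hx hy => simp only [add_tmul, tmul_add, mul_add, add_mul, map_add, hx, hy]

lemma L3 (c q : A) (v : A ⊗[k] A) :
    (τ) ((α) ((((1:A) ⊗ₜ[k] c) * v) ⊗ₜ[k] q))
      = (c ⊗ₜ[k] ((1:A) ⊗ₜ[k] (1:A))) * (τ) ((α) (v ⊗ₜ[k] q)) := by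
  induction v using TensorProduct.induction_on with
  | zero => simp
  | tmul r s => simp [Algebra.TensorProduct.tmul_mul_tmul]
  | add x y hx hy => simp only [add_tmul, tmul_add, mul_add, add_mul, map_add, hx, hy]

lemma L4 (d q : A) (v : A ⊗[k] A) :
    (τ) ((α) ((v * (d ⊗ₜ[k] (1:A))) ⊗ₜ[k] q))
      = (τ) ((α) (v ⊗ₜ[k] q)) * ((1:A) ⊗ₜ[k] ((1:A) ⊗ₜ[k] d)) := by
  induction v using TensorProduct.induction_on with
  | zero => simp
  | tmul r s => simp [Algebra.TensorProduct.tmul_mul_tmul]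
  | add x y hx hy => simp only [add_tmul, tmul_add, mul_add, add_mul, map_add, hx, hy]

lemma L5 (c q : A) (v : A ⊗[k] A) :
    (τ) ((τ) ((α) (v ⊗ₜ[k] (c * q))))
      = (c ⊗ₜ[k] ((1:A) ⊗ₜ[k] (1:A))) * (τ) ((τ) ((α) (v ⊗ₜ[k] q))) := by
  induction v using TensorProduct.induction_on with
  | zero => simp
  | tmul r s => simp [Algebra.TensorProduct.tmul_mul_tmul]
  | add x y hx hy => simp only [add_tmul, tmul_add, mul_add, add_mul, map_add, hx, hy]

lemma L6 (d q : A) (v : A ⊗[k] A) :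
    (τ) ((τ) ((α) ((v * ((1:A) ⊗ₜ[k] d)) ⊗ₜ[k] q)))
      = (τ) ((τ) ((α) (v ⊗ₜ[k] q))) * ((1:A) ⊗ₜ[k] ((1:A) ⊗ₜ[k] d)) := by
  induction v using TensorProduct.induction_on with
  | zero => simp
  | tmul r s => simp [Algebra.TensorProduct.tmul_mul_tmul]
  | add x y hx hy => simp only [add_tmul, tmul_add, mul_add, add_mul, map_add, hx, hy]

lemma L7 (p q : A) (w : A ⊗[k] A) :
    (τ) ((τ) ((α) (((p ⊗ₜ[k] (1:A)) * w) ⊗ₜ[k] q))) = psi (q ⊗ₜ[k] p) w := by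
  induction w using TensorProduct.induction_on with
  | zero => simp [psi]
  | tmul r s => simp [Algebra.TensorProduct.tmul_mul_tmul, psi_tmul]
  | add x y hx hy =>
    simp only [add_tmul, tmul_add, mul_add, add_mul, map_add, hx, hy]
    simp [psi, mul_add, tmul_add]

end Aux

section Claims
variable (db : A →ₗ[k] A →ₗ[k] A ⊗[k] A)

local notation "σ" => TensorProduct.comm k A A
local notation "α" => TensorProduct.assoc k A A A
local notation "τ" => tau3 k A

@[simp] lemma tau3_symm_tmul (x y z : A) :
    (tau3 k A).symm (x ⊗ₜ[k] (y ⊗ₜ[k] z)) = z ⊗ₜ[k] (x ⊗ₜ[k] y) := rfl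

@[simp] lemma idDb_tmul (x y z : A) :
    idDb db (x ⊗ₜ[k] (y ⊗ₜ[k] z)) = x ⊗ₜ[k] (db y z) := rfl

lemma dbId_tmul (x : A) (y z : A) :
    dbId db (x ⊗ₜ[k] (y ⊗ₜ[k] z)) = (α) ((db x y) ⊗ₜ[k] z) := rfl

lemma psi_zero_right (u : A ⊗[k] A) : psi u 0 = 0 := by simp [psi]

lemma psi_add_right (u v v' : A ⊗[k] A) : psi u (v + v') = psi u v + psi u v' := by
  simp [psi, mul_add, tmul_add]

lemma claimA
    (outer : ∀ a b c : A,
      db a (b * c) = (b ⊗ₜ[k] (1 : A)) * db a c + db a b * ((1 : A) ⊗ₜ[k] c))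
    (a c : A) (u : A ⊗[k] A) :
    dbId db (a ⊗ₜ[k] ((c ⊗ₜ[k] (1:A)) * u))
      = (c ⊗ₜ[k] ((1:A) ⊗ₜ[k] (1:A))) * dbId db (a ⊗ₜ[k] u) + psi (db a c) u := by
  induction u using TensorProduct.induction_on with
  | zero => simp [psi_zero_right]
  | tmul p q =>
    rw [Algebra.TensorProduct.tmul_mul_tmul, one_mul, dbId_tmul, dbId_tmul,
      outer a c p, add_tmul, map_add, L1, L2]
  | add x y hx hy =>
    simp only [tmul_add, mul_add, map_add, hx, hy, psi_add_right]
    abel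

lemma claimB (a d : A) (u : A ⊗[k] A) :
    dbId db (a ⊗ₜ[k] (u * ((1:A) ⊗ₜ[k] d)))
      = dbId db (a ⊗ₜ[k] u) * ((1:A) ⊗ₜ[k] ((1:A) ⊗ₜ[k] d)) := by
  induction u using TensorProduct.induction_on with
  | zero => simp
  | tmul p q =>
    rw [Algebra.TensorProduct.tmul_mul_tmul, mul_one, dbId_tmul, dbId_tmul, LB]
  | add x y hx hy =>
    simp only [tmul_add, add_mul, mul_add, map_add, hx, hy]

lemma claim1
    (skew : ∀ a b : A, db a b = - σ (db b a))
    (outer : ∀ a b c : A,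
      db a (b * c) = (b ⊗ₜ[k] (1 : A)) * db a c + db a b * ((1 : A) ⊗ₜ[k] c))
    (c d : A) (u : A ⊗[k] A) :
    (τ) (dbId db ((c * d) ⊗ₜ[k] u))
      = (c ⊗ₜ[k] ((1:A) ⊗ₜ[k] (1:A))) * (τ) (dbId db (d ⊗ₜ[k] u))
        + (τ) (dbId db (c ⊗ₜ[k] u)) * ((1:A) ⊗ₜ[k] ((1:A) ⊗ₜ[k] d)) := by
  induction u using TensorProduct.induction_on with
  | zero => simp
  | tmul p q =>
    rw [dbId_tmul, dbId_tmul, dbId_tmul, inner_rule db skew outer c d p,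
      add_tmul, map_add, map_add, L3, L4]
  | add x y hx hy =>
    simp only [tmul_add, add_mul, mul_add, map_add, hx, hy]
    abel

lemma claimC (b c : A) (u : A ⊗[k] A) :
    (τ) ((τ) (dbId db (b ⊗ₜ[k] ((((1:A) ⊗ₜ[k] c)) * u))))
      = (c ⊗ₜ[k] ((1:A) ⊗ₜ[k] (1:A))) * (τ) ((τ) (dbId db (b ⊗ₜ[k] u))) := by
  induction u using TensorProduct.induction_on with
  | zero => simp
  | tmul p q =>
    rw [Algebra.TensorProduct.tmul_mul_tmul, one_mul, dbId_tmul, dbId_tmul, L5]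
  | add x y hx hy =>
    simp only [tmul_add, mul_add, map_add, hx, hy]

lemma claimD
    (outer : ∀ a b c : A,
      db a (b * c) = (b ⊗ₜ[k] (1 : A)) * db a c + db a b * ((1 : A) ⊗ₜ[k] c))
    (b d : A) (u : A ⊗[k] A) :
    (τ) ((τ) (dbId db (b ⊗ₜ[k] (u * (d ⊗ₜ[k] (1:A))))))
      = (τ) ((τ) (dbId db (b ⊗ₜ[k] u))) * ((1:A) ⊗ₜ[k] ((1:A) ⊗ₜ[k] d))
        + psi ((σ) u) (db b d) := by
  induction u using TensorProduct.induction_on with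
  | zero => simp [psi]
  | tmul p q =>
    rw [Algebra.TensorProduct.tmul_mul_tmul, mul_one, dbId_tmul, dbId_tmul,
      outer b p d, add_tmul, map_add, map_add, map_add, L6, L7,
      TensorProduct.comm_tmul]
    abel
  | add x y hx hy =>
    simp only [tmul_add, add_mul, mul_add, map_add, hx, hy, psi_add_left]
    abel

lemma tb_expand (a b x : A) :
    tripleBracket db a b x
      = dbId db (a ⊗ₜ[k] (db b x))
        + (τ) (dbId db (x ⊗ₜ[k] (db a b)))
        + (τ) ((τ) (dbId db (b ⊗ₜ[k] (db x a)))) := by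
  simp [tripleBracket, Finset.sum_range_succ, pow_succ, Module.End.mul_apply,
    Module.End.one_apply, LinearEquiv.coe_coe]

end Claims

/-- the triple bracket associated to a double bracket is a derivation
in its last argument for the outer trimodule structure:
`⟪a,b,cd⟫ = (c⊗1⊗1)⟪a,b,d⟫ + ⟪a,b,c⟫(1⊗1⊗d)`. -/
theorem tripleBracket_outer_derivation_last
    (db : A →ₗ[k] A →ₗ[k] A ⊗[k] A)
    (skew : ∀ a b : A, db a b = - (TensorProduct.comm k A A) (db b a))
    (outer : ∀ a b c : A,
      db a (b * c) = (b ⊗ₜ[k] (1 : A)) * db a c + db a b * ((1 : A) ⊗ₜ[k] c)) :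
    ∀ a b c d : A,
      tripleBracket db a b (c * d)
        = (c ⊗ₜ[k] ((1 : A) ⊗ₜ[k] (1 : A))) * tripleBracket db a b d
          + tripleBracket db a b c * ((1 : A) ⊗ₜ[k] ((1 : A) ⊗ₜ[k] d)) := by
  intro a b c d
  rw [tb_expand db a b (c*d), tb_expand db a b d, tb_expand db a b c]
  rw [outer b c d, inner_rule db skew outer c d a]
  rw [tmul_add, tmul_add, map_add, map_add, map_add, map_add]
  rw [claimA db outer a c (db b d), claimB db a d (db b c),
    claim1 db skew outer c d (db a b),
    claimC db b c (db d a), claimD db outer b d (db c a)]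
  have h1 : (TensorProduct.comm k A A) (db c a) = - db a c := by
    rw [skew a c, neg_neg]
  rw [h1, psi_neg_left]
  simp only [mul_add, add_mul]
  abel


end
end
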